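/- arXiv:2211.15639 — 3 statements merged into one kernel-verified Lean document; each statement's English description precedes it below -/
import Mathlib

section
/- Let $(a_{i_1,i_2,i_3})_{1\le i_1,i_2,i_3\le n}$ be a real 3-tensor such that for each fixed pair of two indices the sum over the remaining index is zero. Let $\pi_1, \pi_2$ be independent uniformly random permutations of $\{1,\dots,n\}$ and $C_n = \sum_{i=1}^n a_{i,\pi_1(i),\pi_2(i)}$. Then $\mathrm{Var}[C_n] = \frac{n-2}{n(n-1)^2} \sum_{1\le i_1,i_2,i_3\le n} a_{i_1,i_2,i_3}^2$. -/
open MeasureTheory ProbabilityTheory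

instance (n : ℕ) : MeasurableSpace (Equiv.Perm (Fin n)) := ⊤

instance (n : ℕ) : DiscreteMeasurableSpace (Equiv.Perm (Fin n)) :=
  ⟨fun _ => MeasurableSpace.measurableSet_top⟩

open Finset

set_option maxHeartbeats 1600000

private lemma fiber1_card_eq (n : ℕ) (i j j' : Fin n) :
    (univ.filter fun π : Equiv.Perm (Fin n) => π i = j).card
      = (univ.filter fun π : Equiv.Perm (Fin n) => π i = j').card := by
  refine Finset.card_bij' (fun π _ => Equiv.swap j j' * π) (fun π _ => Equiv.swap j j' * π)
    ?_ ?_ ?_ ?_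
  · intro π hπ
    simp only [mem_filter, mem_univ, true_and] at hπ ⊢
    simp [Equiv.Perm.mul_apply, hπ]
  · intro π hπ
    simp only [mem_filter, mem_univ, true_and] at hπ ⊢
    simp [Equiv.Perm.mul_apply, hπ]
  · intro π _
    show Equiv.swap j j' * (Equiv.swap j j' * π) = π
    rw [← mul_assoc, Equiv.swap_mul_self, one_mul]
  · intro π _
    show Equiv.swap j j' * (Equiv.swap j j' * π) = π
    rw [← mul_assoc, Equiv.swap_mul_self, one_mul]

private lemma fiber1_card (n : ℕ) (i j : Fin n) :
    ((univ.filter fun π : Equiv.Perm (Fin n) => π i = j).card : ℝ)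
      = (Fintype.card (Equiv.Perm (Fin n)) : ℝ) / n := by
  have hn : 0 < n := i.pos
  have key : n * (univ.filter fun π : Equiv.Perm (Fin n) => π i = j).card
      = Fintype.card (Equiv.Perm (Fin n)) := by
    have h := Finset.card_eq_sum_card_fiberwise
      (f := fun π : Equiv.Perm (Fin n) => π i) (s := univ) (t := univ)
      (fun π _ => mem_univ _)
    rw [Finset.card_univ] at h
    rw [h, Finset.sum_congr rfl (fun j' _ => fiber1_card_eq n i j' j),
      Finset.sum_const, Finset.card_univ, Fintype.card_fin, smul_eq_mul]
  have hn' : (n : ℝ) ≠ 0 := Nat.cast_ne_zero.mpr hn.ne'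
  rw [eq_div_iff hn', mul_comm]
  exact_mod_cast congrArg (Nat.cast : ℕ → ℝ) key

private lemma tau_spec (n : ℕ) {j k j' k' : Fin n} (hjk : j ≠ k) (hjk' : j' ≠ k') :
    (Equiv.swap (Equiv.swap j j' k) k' * Equiv.swap j j') j = j' ∧
    (Equiv.swap (Equiv.swap j j' k) k' * Equiv.swap j j') k = k' := by
  constructor
  · have h1 : Equiv.swap j j' k ≠ j' := by
      intro h
      exact hjk (Equiv.injective _ (h.trans (Equiv.swap_apply_left j j').symm)).symm
    rw [Equiv.Perm.mul_apply, Equiv.swap_apply_left,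
      Equiv.swap_apply_of_ne_of_ne (Ne.symm h1) hjk']
  · rw [Equiv.Perm.mul_apply]
    exact Equiv.swap_apply_left _ _

private lemma fiber2_card_eq (n : ℕ) (i i' : Fin n) {j k j' k' : Fin n}
    (hjk : j ≠ k) (hjk' : j' ≠ k') :
    (univ.filter fun π : Equiv.Perm (Fin n) => π i = j ∧ π i' = k).card
      = (univ.filter fun π : Equiv.Perm (Fin n) => π i = j' ∧ π i' = k').card := by
  set τ := Equiv.swap (Equiv.swap j j' k) k' * Equiv.swap j j' with hτ
  obtain ⟨ht1, ht2⟩ := tau_spec n hjk hjk'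
  rw [← hτ] at ht1 ht2
  refine Finset.card_bij' (fun π _ => τ * π) (fun π _ => τ⁻¹ * π) ?_ ?_ ?_ ?_
  · intro π hπ
    simp only [mem_filter, mem_univ, true_and] at hπ ⊢
    obtain ⟨hπ1, hπ2⟩ := hπ
    constructor
    · rw [Equiv.Perm.mul_apply, hπ1, ht1]
    · rw [Equiv.Perm.mul_apply, hπ2, ht2]
  · intro π hπ
    simp only [mem_filter, mem_univ, true_and] at hπ ⊢
    obtain ⟨hπ1, hπ2⟩ := hπ
    constructor
    · rw [Equiv.Perm.mul_apply, hπ1, ← ht1, Equiv.Perm.coe_inv, Equiv.symm_apply_apply]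
    · rw [Equiv.Perm.mul_apply, hπ2, ← ht2, Equiv.Perm.coe_inv, Equiv.symm_apply_apply]
  · intro π _
    show τ⁻¹ * (τ * π) = π
    rw [← mul_assoc, inv_mul_cancel, one_mul]
  · intro π _
    show τ * (τ⁻¹ * π) = π
    rw [← mul_assoc, mul_inv_cancel, one_mul]

private lemma fiber2_card (n : ℕ) {i i' : Fin n} (hii : i ≠ i') {j k : Fin n} (hjk : j ≠ k) :
    ((univ.filter fun π : Equiv.Perm (Fin n) => π i = j ∧ π i' = k).card : ℝ)
      = (Fintype.card (Equiv.Perm (Fin n)) : ℝ) / ((n : ℝ) * ((n : ℝ) - 1)) := by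
  have hn : 2 ≤ n := by
    by_contra h
    have hi := i.isLt
    have hi' := i'.isLt
    exact hii (Fin.ext (by omega))
  have key : (n * n - n) * (univ.filter fun π : Equiv.Perm (Fin n) => π i = j ∧ π i' = k).card
      = Fintype.card (Equiv.Perm (Fin n)) := by
    have h := Finset.card_eq_sum_card_fiberwise
      (f := fun π : Equiv.Perm (Fin n) => (π i, π i')) (s := univ) (t := univ.offDiag)
      (fun π _ => Finset.mem_offDiag.mpr ⟨mem_univ _, mem_univ _, fun e => hii (π.injective e)⟩)
    rw [Finset.card_univ] at h
    have hfib : ∀ p ∈ (univ : Finset (Fin n)).offDiag,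
        (univ.filter fun π : Equiv.Perm (Fin n) => (π i, π i') = p).card
          = (univ.filter fun π : Equiv.Perm (Fin n) => π i = j ∧ π i' = k).card := by
      intro p hp
      have hp' : p.1 ≠ p.2 := (Finset.mem_offDiag.mp hp).2.2
      have : (univ.filter fun π : Equiv.Perm (Fin n) => (π i, π i') = p)
          = univ.filter fun π : Equiv.Perm (Fin n) => π i = p.1 ∧ π i' = p.2 := by
        apply Finset.filter_congr
        intro π _
        simp [Prod.ext_iff]
      rw [this]
      exact fiber2_card_eq n i i' hp' hjk
    rw [h, Finset.sum_congr rfl hfib, Finset.sum_const, smul_eq_mul,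
      Finset.offDiag_card, Finset.card_univ, Fintype.card_fin]
  have hcast : ((n * n - n : ℕ) : ℝ) = (n : ℝ) * ((n : ℝ) - 1) := by
    have hle : n ≤ n * n := Nat.le_mul_of_pos_left n (by omega)
    rw [Nat.cast_sub hle]
    push_cast
    ring
  have hne : (n : ℝ) * ((n : ℝ) - 1) ≠ 0 := by
    have h2 : (2 : ℝ) ≤ (n : ℝ) := by exact_mod_cast hn
    have : (0:ℝ) < (n : ℝ) * ((n : ℝ) - 1) := by nlinarith
    exact this.ne'
  rw [eq_div_iff hne, ← hcast, mul_comm]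
  exact_mod_cast congrArg (Nat.cast : ℕ → ℝ) key

private lemma sum_perm_one (n : ℕ) (i : Fin n) (f : Fin n → ℝ) :
    ∑ π : Equiv.Perm (Fin n), f (π i)
      = (Fintype.card (Equiv.Perm (Fin n)) : ℝ) / n * ∑ j, f j := by
  rw [← Finset.sum_fiberwise_of_maps_to (g := fun π : Equiv.Perm (Fin n) => π i)
    (t := univ) (fun π _ => mem_univ _) (fun π => f (π i))]
  rw [Finset.mul_sum]
  refine Finset.sum_congr rfl fun j _ => ?_
  calc ∑ π ∈ univ.filter (fun π : Equiv.Perm (Fin n) => π i = j), f (π i)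
      = ∑ π ∈ univ.filter (fun π : Equiv.Perm (Fin n) => π i = j), f j :=
        Finset.sum_congr rfl fun π hπ => by rw [(Finset.mem_filter.mp hπ).2]
    _ = ((univ.filter fun π : Equiv.Perm (Fin n) => π i = j).card : ℝ) * f j := by
        rw [Finset.sum_const, nsmul_eq_mul]
    _ = _ := by rw [fiber1_card]

private lemma sum_perm_two (n : ℕ) {i i' : Fin n} (hii : i ≠ i') (g : Fin n → Fin n → ℝ) :
    ∑ π : Equiv.Perm (Fin n), g (π i) (π i')
      = (Fintype.card (Equiv.Perm (Fin n)) : ℝ) / ((n : ℝ) * ((n : ℝ) - 1))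
        * ∑ p ∈ (univ : Finset (Fin n)).offDiag, g p.1 p.2 := by
  rw [← Finset.sum_fiberwise_of_maps_to (g := fun π : Equiv.Perm (Fin n) => (π i, π i'))
    (t := univ.offDiag)
    (fun π _ => Finset.mem_offDiag.mpr ⟨mem_univ _, mem_univ _, fun e => hii (π.injective e)⟩)
    (fun π => g (π i) (π i'))]
  rw [Finset.mul_sum]
  refine Finset.sum_congr rfl fun p hp => ?_
  have hp' : p.1 ≠ p.2 := (Finset.mem_offDiag.mp hp).2.2
  calc ∑ π ∈ univ.filter (fun π : Equiv.Perm (Fin n) => (π i, π i') = p), g (π i) (π i')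
      = ∑ π ∈ univ.filter (fun π : Equiv.Perm (Fin n) => (π i, π i') = p), g p.1 p.2 := by
        refine Finset.sum_congr rfl fun π hπ => ?_
        have h := (Finset.mem_filter.mp hπ).2
        rw [Prod.ext_iff] at h
        rw [show π i = p.1 from h.1, show π i' = p.2 from h.2]
    _ = ((univ.filter fun π : Equiv.Perm (Fin n) => (π i, π i') = p).card : ℝ) * g p.1 p.2 := by
        rw [Finset.sum_const, nsmul_eq_mul]
    _ = _ := by
        have : (univ.filter fun π : Equiv.Perm (Fin n) => (π i, π i') = p)
            = univ.filter fun π : Equiv.Perm (Fin n) => π i = p.1 ∧ π i' = p.2 := by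
          apply Finset.filter_congr
          intro π _
          simp [Prod.ext_iff]
        rw [this, fiber2_card n hii hp']

private lemma sum_offDiag_eq (n : ℕ) (F : Fin n → Fin n → ℝ) :
    ∑ p ∈ (univ : Finset (Fin n)).offDiag, F p.1 p.2
      = (∑ j, ∑ k, F j k) - ∑ j, F j j := by
  have hsplit : ∑ p ∈ (univ : Finset (Fin n)) ×ˢ univ, F p.1 p.2
      = ∑ p ∈ (univ : Finset (Fin n)).diag, F p.1 p.2
        + ∑ p ∈ (univ : Finset (Fin n)).offDiag, F p.1 p.2 := by
    rw [← Finset.sum_union (Finset.disjoint_diag_offDiag _), Finset.diag_union_offDiag]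
  have hdiag : ∑ p ∈ (univ : Finset (Fin n)).diag, F p.1 p.2 = ∑ j, F j j := by
    refine Finset.sum_nbij' (fun p => p.1) (fun j => (j, j)) ?_ ?_ ?_ ?_ ?_
    · intro p _; exact mem_univ _
    · intro j _; exact Finset.mem_diag.mpr ⟨mem_univ _, rfl⟩
    · intro p hp
      have h := (Finset.mem_diag.mp hp).2
      exact Prod.ext rfl h
    · intro j _; rfl
    · intro p hp
      have h := (Finset.mem_diag.mp hp).2
      rw [← h]
  have hprod : ∑ j, ∑ k, F j k = ∑ p ∈ (univ : Finset (Fin n)) ×ˢ univ, F p.1 p.2 :=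
    (Finset.sum_product (s := univ) (t := univ) (f := fun p => F p.1 p.2)).symm
  rw [hprod, hsplit, hdiag]
  ring

private lemma integral_unif2 (n : ℕ) (f : Equiv.Perm (Fin n) × Equiv.Perm (Fin n) → ℝ) :
    ∫ p, f p ∂(((PMF.uniformOfFintype (Equiv.Perm (Fin n))).toMeasure).prod
        ((PMF.uniformOfFintype (Equiv.Perm (Fin n))).toMeasure))
      = ∑ π₁ : Equiv.Perm (Fin n), ∑ π₂ : Equiv.Perm (Fin n),
          (Fintype.card (Equiv.Perm (Fin n)) : ℝ)⁻¹
            * (Fintype.card (Equiv.Perm (Fin n)) : ℝ)⁻¹ * f (π₁, π₂) := by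
  rw [integral_fintype (Integrable.of_finite)]
  rw [Fintype.sum_prod_type]
  refine Finset.sum_congr rfl fun π₁ _ => Finset.sum_congr rfl fun π₂ _ => ?_
  have hset : ({(π₁, π₂)} : Set (Equiv.Perm (Fin n) × Equiv.Perm (Fin n)))
      = {π₁} ×ˢ {π₂} := by
    rw [Set.singleton_prod_singleton]
  rw [hset, measureReal_def, Measure.prod_prod,
    PMF.toMeasure_apply_singleton _ _ (measurableSet_singleton _),
    PMF.toMeasure_apply_singleton _ _ (measurableSet_singleton _),
    PMF.uniformOfFintype_apply, PMF.uniformOfFintype_apply]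
  simp [smul_eq_mul, ENNReal.toReal_inv]

private lemma alg (n : ℕ) (a : Fin n → Fin n → Fin n → ℝ)
    (h2 : ∀ i1 i3, ∑ i2, a i1 i2 i3 = 0) (h3 : ∀ i1 i2, ∑ i3, a i1 i2 i3 = 0)
    (i i' : Fin n) :
    ∑ q ∈ (univ : Finset (Fin n)).offDiag, ∑ p ∈ (univ : Finset (Fin n)).offDiag,
        a i q.1 p.1 * a i' q.2 p.2
      = ∑ j, ∑ k, a i j k * a i' j k := by
  have inner : ∀ j j' : Fin n,
      ∑ p ∈ (univ : Finset (Fin n)).offDiag, a i j p.1 * a i' j' p.2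
        = -(∑ k, a i j k * a i' j' k) := by
    intro j j'
    rw [sum_offDiag_eq n (fun k k' => a i j k * a i' j' k')]
    have hfact : ∑ k, ∑ k', a i j k * a i' j' k' = (∑ k, a i j k) * ∑ k', a i' j' k' :=
      (Finset.sum_mul_sum _ _ _ _).symm
    rw [hfact, h3, zero_mul, zero_sub]
  rw [Finset.sum_congr rfl fun q _ => inner q.1 q.2]
  rw [sum_offDiag_eq n (fun j j' => -(∑ k, a i j k * a i' j' k))]
  have hfull : ∑ j, ∑ j', -(∑ k : Fin n, a i j k * a i' j' k) = 0 := by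
    refine Finset.sum_eq_zero fun j _ => ?_
    have inner2 : ∑ j' : Fin n, ∑ k, a i j k * a i' j' k = 0 := by
      rw [Finset.sum_comm]
      refine Finset.sum_eq_zero fun k _ => ?_
      rw [← Finset.mul_sum, h2, mul_zero]
    rw [Finset.sum_neg_distrib, inner2, neg_zero]
  rw [hfull, zero_sub, Finset.sum_neg_distrib, neg_neg]

/-- Variance of the combinatorial sum `C_n = ∑ i a_{i, π₁(i), π₂(i)}` for a doubly
centered 3-tensor, with `π₁, π₂` independent uniform random permutations. -/
theorem stmt_2 (n : ℕ) (a : Fin n → Fin n → Fin n → ℝ)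
    (h1 : ∀ i2 i3, ∑ i1, a i1 i2 i3 = 0)
    (h2 : ∀ i1 i3, ∑ i2, a i1 i2 i3 = 0)
    (h3 : ∀ i1 i2, ∑ i3, a i1 i2 i3 = 0) :
    variance (fun p : Equiv.Perm (Fin n) × Equiv.Perm (Fin n) => ∑ i, a i (p.1 i) (p.2 i))
      (((PMF.uniformOfFintype (Equiv.Perm (Fin n))).toMeasure).prod
        ((PMF.uniformOfFintype (Equiv.Perm (Fin n))).toMeasure)) =
      ((n : ℝ) - 2) / ((n : ℝ) * ((n : ℝ) - 1) ^ 2) * ∑ i1, ∑ i2, ∑ i3, (a i1 i2 i3) ^ 2 := by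
  rcases Nat.lt_or_ge n 2 with hn | hn
  · -- degenerate case `n ≤ 1`: the tensor vanishes identically
    have ha : ∀ i j k, a i j k = 0 := by
      intro i j k
      have hi := i.isLt
      have hn1 : n = 1 := by omega
      have hall : ∀ i1 : Fin n, i1 = i := fun i1 => Fin.ext (by have := i1.isLt; omega)
      have h := h1 j k
      have hcongr : ∑ i1, a i1 j k = ∑ _i1 : Fin n, a i j k :=
        Finset.sum_congr rfl fun i1 _ => by rw [hall i1]
      rw [hcongr, Finset.sum_const, Finset.card_univ, Fintype.card_fin, hn1, one_smul] at h
      exact h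
    have hX : (fun p : Equiv.Perm (Fin n) × Equiv.Perm (Fin n) => ∑ i, a i (p.1 i) (p.2 i))
        = fun _ => (0 : ℝ) := by
      funext p
      exact Finset.sum_eq_zero fun i _ => ha _ _ _
    have hS : ∑ i1, ∑ i2, ∑ i3, a i1 i2 i3 ^ 2 = 0 :=
      Finset.sum_eq_zero fun i1 _ => Finset.sum_eq_zero fun i2 _ =>
        Finset.sum_eq_zero fun i3 _ => by rw [ha]; ring
    rw [hX, hS, mul_zero]
    exact variance_zero _
  · -- main case `2 ≤ n`
    have hn0 : (n : ℝ) ≠ 0 := by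
      have : (0:ℝ) < n := by exact_mod_cast Nat.lt_of_lt_of_le Nat.zero_lt_two hn
      exact this.ne'
    have hn1 : (n : ℝ) - 1 ≠ 0 := by
      have h2' : (2 : ℝ) ≤ (n : ℝ) := by exact_mod_cast hn
      intro h; linarith
    set N : ℝ := (Fintype.card (Equiv.Perm (Fin n)) : ℝ) with hNdef
    have hN0 : N ≠ 0 := by
      have : 0 < Fintype.card (Equiv.Perm (Fin n)) := Fintype.card_pos
      exact Nat.cast_ne_zero.mpr this.ne'
    rw [variance_eq_sub MemLp.of_discrete]
    -- mean is zero
    have hmean : ∀ π₁ : Equiv.Perm (Fin n),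
        ∑ π₂ : Equiv.Perm (Fin n), (∑ i, a i (π₁ i) (π₂ i)) = 0 := by
      intro π₁
      rw [Finset.sum_comm]
      refine Finset.sum_eq_zero fun i _ => ?_
      calc ∑ π₂ : Equiv.Perm (Fin n), a i (π₁ i) (π₂ i)
          = N / n * ∑ k, a i (π₁ i) k := sum_perm_one n i _
        _ = 0 := by rw [h3, mul_zero]
    have hEmean : (((PMF.uniformOfFintype (Equiv.Perm (Fin n))).toMeasure).prod
          ((PMF.uniformOfFintype (Equiv.Perm (Fin n))).toMeasure))[
        fun p : Equiv.Perm (Fin n) × Equiv.Perm (Fin n) => ∑ i, a i (p.1 i) (p.2 i)] = 0 := by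
      rw [integral_unif2 n (fun p => ∑ i, a i (p.1 i) (p.2 i))]
      refine Finset.sum_eq_zero fun π₁ _ => ?_
      rw [← Finset.mul_sum, hmean π₁, mul_zero]
    -- second moment
    have hT1 : ∀ i : Fin n,
        ∑ π₁ : Equiv.Perm (Fin n), ∑ π₂ : Equiv.Perm (Fin n),
            a i (π₁ i) (π₂ i) * a i (π₁ i) (π₂ i)
          = N / n * (N / n) * ∑ j, ∑ k, a i j k * a i j k := by
      intro i
      calc ∑ π₁ : Equiv.Perm (Fin n), ∑ π₂ : Equiv.Perm (Fin n),
              a i (π₁ i) (π₂ i) * a i (π₁ i) (π₂ i)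
          = ∑ π₁ : Equiv.Perm (Fin n), N / n * ∑ k, a i (π₁ i) k * a i (π₁ i) k :=
            Finset.sum_congr rfl fun π₁ _ =>
              sum_perm_one n i (fun k => a i (π₁ i) k * a i (π₁ i) k)
        _ = N / n * ∑ π₁ : Equiv.Perm (Fin n), ∑ k, a i (π₁ i) k * a i (π₁ i) k := by
            rw [← Finset.mul_sum]
        _ = N / n * (N / n * ∑ j, ∑ k, a i j k * a i j k) :=
            congrArg (fun x => N / n * x)
              (sum_perm_one n i (fun j => ∑ k, a i j k * a i j k))
        _ = N / n * (N / n) * ∑ j, ∑ k, a i j k * a i j k := by ring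
    have hT2 : ∀ i i' : Fin n, i ≠ i' →
        ∑ π₁ : Equiv.Perm (Fin n), ∑ π₂ : Equiv.Perm (Fin n),
            a i (π₁ i) (π₂ i) * a i' (π₁ i') (π₂ i')
          = N / ((n : ℝ) * ((n : ℝ) - 1)) * (N / ((n : ℝ) * ((n : ℝ) - 1)))
              * ∑ j, ∑ k, a i j k * a i' j k := by
      intro i i' hii
      calc ∑ π₁ : Equiv.Perm (Fin n), ∑ π₂ : Equiv.Perm (Fin n),
              a i (π₁ i) (π₂ i) * a i' (π₁ i') (π₂ i')
          = ∑ π₁ : Equiv.Perm (Fin n), N / ((n : ℝ) * ((n : ℝ) - 1))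
              * ∑ p ∈ (univ : Finset (Fin n)).offDiag, a i (π₁ i) p.1 * a i' (π₁ i') p.2 :=
            Finset.sum_congr rfl fun π₁ _ =>
              sum_perm_two n hii (fun x y => a i (π₁ i) x * a i' (π₁ i') y)
        _ = N / ((n : ℝ) * ((n : ℝ) - 1)) * ∑ π₁ : Equiv.Perm (Fin n),
              ∑ p ∈ (univ : Finset (Fin n)).offDiag, a i (π₁ i) p.1 * a i' (π₁ i') p.2 := by
            rw [← Finset.mul_sum]
        _ = N / ((n : ℝ) * ((n : ℝ) - 1)) * (N / ((n : ℝ) * ((n : ℝ) - 1))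
              * ∑ q ∈ (univ : Finset (Fin n)).offDiag,
                  ∑ p ∈ (univ : Finset (Fin n)).offDiag, a i q.1 p.1 * a i' q.2 p.2) :=
            congrArg (fun x => N / ((n : ℝ) * ((n : ℝ) - 1)) * x)
              (sum_perm_two n hii
                (fun x y => ∑ p ∈ (univ : Finset (Fin n)).offDiag, a i x p.1 * a i' y p.2))
        _ = N / ((n : ℝ) * ((n : ℝ) - 1)) * (N / ((n : ℝ) * ((n : ℝ) - 1)))
              * ∑ q ∈ (univ : Finset (Fin n)).offDiag,
                  ∑ p ∈ (univ : Finset (Fin n)).offDiag, a i q.1 p.1 * a i' q.2 p.2 := by ring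
        _ = _ := by rw [alg n a h2 h3 i i']
    have hoff : ∑ q ∈ (univ : Finset (Fin n)).offDiag, ∑ j, ∑ k, a q.1 j k * a q.2 j k
        = -∑ i1, ∑ i2, ∑ i3, a i1 i2 i3 ^ 2 := by
      have hsplit1 : ∑ q ∈ (univ : Finset (Fin n)).offDiag, ∑ j, ∑ k, a q.1 j k * a q.2 j k
          = (∑ i, ∑ i', ∑ j, ∑ k : Fin n, a i j k * a i' j k)
            - ∑ i, ∑ j, ∑ k : Fin n, a i j k * a i j k :=
        sum_offDiag_eq n (fun i i' => ∑ j, ∑ k, a i j k * a i' j k)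
      rw [hsplit1]
      have hfull2 : ∑ i, ∑ i', ∑ j, ∑ k : Fin n, a i j k * a i' j k = 0 := by
        refine Finset.sum_eq_zero fun i _ => ?_
        rw [Finset.sum_comm]
        refine Finset.sum_eq_zero fun j _ => ?_
        rw [Finset.sum_comm]
        refine Finset.sum_eq_zero fun k _ => ?_
        rw [← Finset.mul_sum, h1, mul_zero]
      have hdiag2 : ∑ i, ∑ j, ∑ k : Fin n, a i j k * a i j k
          = ∑ i1, ∑ i2, ∑ i3, a i1 i2 i3 ^ 2 := by
        simp [sq]
      rw [hfull2, hdiag2, zero_sub]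
    have hsq : ∑ π₁ : Equiv.Perm (Fin n), ∑ π₂ : Equiv.Perm (Fin n),
          N⁻¹ * N⁻¹ * (∑ i, a i (π₁ i) (π₂ i)) ^ 2
        = ((n : ℝ) - 2) / ((n : ℝ) * ((n : ℝ) - 1) ^ 2)
            * ∑ i1, ∑ i2, ∑ i3, a i1 i2 i3 ^ 2 := by
      have expand : ∀ π₁ π₂ : Equiv.Perm (Fin n), (∑ i, a i (π₁ i) (π₂ i)) ^ 2
          = ∑ i, ∑ i', a i (π₁ i) (π₂ i) * a i' (π₁ i') (π₂ i') := by
        intro π₁ π₂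
        rw [sq, Finset.sum_mul_sum]
      calc ∑ π₁ : Equiv.Perm (Fin n), ∑ π₂ : Equiv.Perm (Fin n),
              N⁻¹ * N⁻¹ * (∑ i, a i (π₁ i) (π₂ i)) ^ 2
          = N⁻¹ * N⁻¹ * ∑ π₁ : Equiv.Perm (Fin n), ∑ π₂ : Equiv.Perm (Fin n),
              ∑ i, ∑ i', a i (π₁ i) (π₂ i) * a i' (π₁ i') (π₂ i') := by
            rw [Finset.sum_congr rfl fun π₁ _ => Finset.sum_congr rfl fun π₂ _ =>
              congrArg (fun x => N⁻¹ * N⁻¹ * x) (expand π₁ π₂)]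
            rw [Finset.sum_congr rfl fun π₁ _ => (Finset.mul_sum _ _ _).symm,
              ← Finset.mul_sum]
        _ = N⁻¹ * N⁻¹ * ∑ i, ∑ i', ∑ π₁ : Equiv.Perm (Fin n), ∑ π₂ : Equiv.Perm (Fin n),
              a i (π₁ i) (π₂ i) * a i' (π₁ i') (π₂ i') := by
            have hswap : ∑ π₁ : Equiv.Perm (Fin n), ∑ π₂ : Equiv.Perm (Fin n),
                  ∑ i, ∑ i', a i (π₁ i) (π₂ i) * a i' (π₁ i') (π₂ i')
                = ∑ i, ∑ i', ∑ π₁ : Equiv.Perm (Fin n), ∑ π₂ : Equiv.Perm (Fin n),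
                    a i (π₁ i) (π₂ i) * a i' (π₁ i') (π₂ i') := by
              calc ∑ π₁ : Equiv.Perm (Fin n), ∑ π₂ : Equiv.Perm (Fin n),
                    ∑ i, ∑ i', a i (π₁ i) (π₂ i) * a i' (π₁ i') (π₂ i')
                  = ∑ π₁ : Equiv.Perm (Fin n), ∑ i, ∑ π₂ : Equiv.Perm (Fin n),
                      ∑ i', a i (π₁ i) (π₂ i) * a i' (π₁ i') (π₂ i') :=
                    Finset.sum_congr rfl fun π₁ _ => Finset.sum_comm
                _ = ∑ i, ∑ π₁ : Equiv.Perm (Fin n), ∑ π₂ : Equiv.Perm (Fin n),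
                      ∑ i', a i (π₁ i) (π₂ i) * a i' (π₁ i') (π₂ i') := Finset.sum_comm
                _ = ∑ i, ∑ π₁ : Equiv.Perm (Fin n), ∑ i', ∑ π₂ : Equiv.Perm (Fin n),
                      a i (π₁ i) (π₂ i) * a i' (π₁ i') (π₂ i') :=
                    Finset.sum_congr rfl fun i _ =>
                      Finset.sum_congr rfl fun π₁ _ => Finset.sum_comm
                _ = ∑ i, ∑ i', ∑ π₁ : Equiv.Perm (Fin n), ∑ π₂ : Equiv.Perm (Fin n),
                      a i (π₁ i) (π₂ i) * a i' (π₁ i') (π₂ i') :=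
                    Finset.sum_congr rfl fun i _ => Finset.sum_comm
            rw [hswap]
        _ = N⁻¹ * N⁻¹ * ((∑ q ∈ (univ : Finset (Fin n)).offDiag,
                ∑ π₁ : Equiv.Perm (Fin n), ∑ π₂ : Equiv.Perm (Fin n),
                  a q.1 (π₁ q.1) (π₂ q.1) * a q.2 (π₁ q.2) (π₂ q.2))
              + ∑ i, ∑ π₁ : Equiv.Perm (Fin n), ∑ π₂ : Equiv.Perm (Fin n),
                  a i (π₁ i) (π₂ i) * a i (π₁ i) (π₂ i)) := by
            have hsplit2 : ∑ q ∈ (univ : Finset (Fin n)).offDiag,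
                  ∑ π₁ : Equiv.Perm (Fin n), ∑ π₂ : Equiv.Perm (Fin n),
                    a q.1 (π₁ q.1) (π₂ q.1) * a q.2 (π₁ q.2) (π₂ q.2)
                = (∑ i, ∑ i', ∑ π₁ : Equiv.Perm (Fin n), ∑ π₂ : Equiv.Perm (Fin n),
                    a i (π₁ i) (π₂ i) * a i' (π₁ i') (π₂ i'))
                  - ∑ i, ∑ π₁ : Equiv.Perm (Fin n), ∑ π₂ : Equiv.Perm (Fin n),
                      a i (π₁ i) (π₂ i) * a i (π₁ i) (π₂ i) :=
              sum_offDiag_eq n (fun i i' => ∑ π₁ : Equiv.Perm (Fin n),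
                ∑ π₂ : Equiv.Perm (Fin n), a i (π₁ i) (π₂ i) * a i' (π₁ i') (π₂ i'))
            rw [hsplit2]
            ring
        _ = N⁻¹ * N⁻¹ * ((N / ((n : ℝ) * ((n : ℝ) - 1)) * (N / ((n : ℝ) * ((n : ℝ) - 1)))
                * (-∑ i1, ∑ i2, ∑ i3, a i1 i2 i3 ^ 2))
              + N / n * (N / n) * ∑ i1, ∑ i2, ∑ i3, a i1 i2 i3 ^ 2) := by
            congr 1
            congr 1
            · rw [Finset.sum_congr rfl fun q hq =>
                hT2 q.1 q.2 (Finset.mem_offDiag.mp hq).2.2, ← Finset.mul_sum, hoff]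
            · rw [Finset.sum_congr rfl fun i _ => hT1 i, ← Finset.mul_sum]
              congr 1
              simp [sq]
        _ = ((n : ℝ) - 2) / ((n : ℝ) * ((n : ℝ) - 1) ^ 2)
              * ∑ i1, ∑ i2, ∑ i3, a i1 i2 i3 ^ 2 := by
            field_simp
            ring
    rw [integral_unif2 n ((fun p : Equiv.Perm (Fin n) × Equiv.Perm (Fin n) =>
      ∑ i, a i (p.1 i) (p.2 i)) ^ 2), hEmean]
    simp only [Pi.pow_apply]
    rw [hsq]
    ring
end

section
/- Let $T, T_n, T_n^{(1)}, \dots, T_n^{(B)}$ be real random variables with $T > 0$ a constant, and suppose $\mathbb{P}(T_n < T/2) \to 0$ and $\mathbb{P}(T_n^{(b)} > T/2) \to 0$ for each $b$ as $n \to \infty$, with $T_n^{(1)},\dots,T_n^{(B)}$ identically distributed. Let $p_B = R/(B+1)$ where $R$ is the rank of $T_n$ among $(T_n, T_n^{(1)},\dots,T_n^{(B)})$ ($R=1$ for the largest). If $B \ge 1/\alpha - 1$, then $\mathbb{P}(p_B \le \alpha) \to 1$ as $n \to \infty$. -/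
open MeasureTheory ProbabilityTheory Filter

/-- Consistency of the resampling test with a finite number of resamples: if the test
statistic stays above `T/2` with probability tending to one while each resampled statistic
falls below `T/2` with probability tending to one, then the permutation `p`-value
`p_B = R/(B+1)` is `≤ α` with probability tending to one, provided `B ≥ 1/α - 1`. -/
theorem stmt_8 {Ω : Type*} [MeasureSpace Ω] [IsProbabilityMeasure (ℙ : Measure Ω)]
    (B : ℕ) (α T : ℝ) (hα : 0 < α) (hT : 0 < T) (hB : 1 / α - 1 ≤ (B : ℝ))
    (Tn : ℕ → Ω → ℝ) (Tb : ℕ → Fin B → Ω → ℝ)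
    (hident : ∀ n, ∀ b b' : Fin B, Measure.map (Tb n b) ℙ = Measure.map (Tb n b') ℙ)
    (hTn : Tendsto (fun n => ℙ {ω | Tn n ω < T / 2}) atTop (nhds 0))
    (hTb : ∀ b, Tendsto (fun n => ℙ {ω | T / 2 < Tb n b ω}) atTop (nhds 0)) :
    Tendsto
      (fun n => ℙ {ω |
        ((1 + (Finset.univ.filter fun b : Fin B => Tn n ω < Tb n b ω).card : ℝ) / (B + 1)) ≤ α})
      atTop (nhds 1) := by
  set E : ℕ → Set Ω := fun n => {ω |
      ((1 + (Finset.univ.filter fun b : Fin B => Tn n ω < Tb n b ω).card : ℝ) / (B + 1)) ≤ α}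
    with hE
  set bad : ℕ → Set Ω := fun n =>
      {ω | Tn n ω < T / 2} ∪ ⋃ b ∈ (Finset.univ : Finset (Fin B)), {ω | T / 2 < Tb n b ω}
    with hbad
  -- 1/(B+1) ≤ α
  have hBpos : (0 : ℝ) < (B : ℝ) + 1 := by positivity
  have h1 : (1 : ℝ) / ((B : ℝ) + 1) ≤ α := by
    rw [div_le_iff₀ hBpos]
    have : 1 / α ≤ (B : ℝ) + 1 := by linarith
    calc (1 : ℝ) = α * (1 / α) := by field_simp
    _ ≤ α * ((B : ℝ) + 1) := by
        exact mul_le_mul_of_nonneg_left this hα.le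
  -- complement of bad is inside E
  have hsub : ∀ n, (bad n)ᶜ ⊆ E n := by
    intro n ω hω
    simp only [hbad, Set.compl_union, Set.mem_inter_iff, Set.mem_compl_iff, Set.mem_setOf_eq,
      Set.mem_iUnion, not_exists, Finset.mem_univ] at hω
    obtain ⟨h1', h2'⟩ := hω
    have hcard : (Finset.univ.filter fun b : Fin B => Tn n ω < Tb n b ω) = ∅ := by
      apply Finset.filter_false_of_mem
      intro b _
      have hb' : ¬ (T / 2 < Tb n b ω) := by simpa using h2' b
      push_neg at h1' hb'
      intro hlt
      linarith
    simp only [hE, Set.mem_setOf_eq, hcard, Finset.card_empty, Nat.cast_zero, add_zero]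
    exact h1
  -- probability of bad tends to 0
  have hbad0 : Tendsto (fun n => ℙ (bad n)) atTop (nhds 0) := by
    have hle : ∀ n, ℙ (bad n) ≤
        ℙ {ω | Tn n ω < T / 2} + ∑ b : Fin B, ℙ {ω | T / 2 < Tb n b ω} := by
      intro n
      refine le_trans (measure_union_le _ _) ?_
      refine add_le_add_right ?_ _
      exact measure_biUnion_finset_le _ _
    have hsum : Tendsto
        (fun n => ℙ {ω | Tn n ω < T / 2} + ∑ b : Fin B, ℙ {ω | T / 2 < Tb n b ω})
        atTop (nhds 0) := by
      have := hTn.add (tendsto_finset_sum Finset.univ (fun b _ => hTb b))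
      simpa using this
    exact tendsto_of_tendsto_of_tendsto_of_le_of_le tendsto_const_nhds hsum
      (fun n => zero_le) hle
  -- squeeze
  have hlow : ∀ n, 1 - ℙ (bad n) ≤ ℙ (E n) := by
    intro n
    rw [tsub_le_iff_right]
    calc (1 : ENNReal) = ℙ (Set.univ : Set Ω) := (measure_univ).symm
    _ ≤ ℙ ((bad n)ᶜ ∪ bad n) := by rw [Set.compl_union_self]
    _ ≤ ℙ ((bad n)ᶜ) + ℙ (bad n) := measure_union_le _ _
    _ ≤ ℙ (E n) + ℙ (bad n) := add_le_add_left (measure_mono (hsub n)) _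
  have hone : Tendsto (fun n => (1 : ENNReal) - ℙ (bad n)) atTop (nhds 1) := by
    have := ENNReal.Tendsto.sub (tendsto_const_nhds (x := (1 : ENNReal))) hbad0
      (Or.inl (by norm_num))
    simpa using this
  exact tendsto_of_tendsto_of_tendsto_of_le_of_le hone tendsto_const_nhds hlow
    (fun n => prob_le_one)
end

section
/- Let $\bm X = (X_1,\dots,X_r)$ have marginals with rank maps $R_{\mu_i}$ and let $(X_1',\dots,X_r')$ be an independent copy of $\bm X$. Define $W_i(x,x') = \mathbb{E}\|x - R_{\mu_i}(X_i')\| + \mathbb{E}\|R_{\mu_i}(X_i) - x'\| - \|x - x'\| - \mathbb{E}\|R_{\mu_i}(X_i) - R_{\mu_i}(X_i')\|$. If the variables $X_1,\dots,X_r$ are mutually independent, then $\mathbb{E}\left[\prod_{i=1}^r (W_i(R_{\mu_i}(X_i), R_{\mu_i}(X_i')) + c)\right] = c^r$ for every $c \ge 0$. -/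
open MeasureTheory ProbabilityTheory

/-!
With `K(x, y) = ‖R x - R y‖`, `U = Xᵢ` and `V = X'ᵢ`, the factor
`W(x, y) = E K(x, V) + E K(U, y) - K(x, y) - E K(U, V)` is doubly centred: since `U` and `V` are
independent, `E [E K(U, y)]_{y = V} = E K(U, V)`, hence `E W(x, V) = 0` for every fixed `x`.
As `X` and `X'` are independent, `E ∏ᵢ (Wᵢ(Xᵢ, X'ᵢ) + c)` is the average over `x ~ X` of
`E ∏ᵢ (Wᵢ(xᵢ, X'ᵢ) + c)`, and since the `X'ᵢ` are mutually independent (`X'` has the law of `X`)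
this factors as `∏ᵢ (E Wᵢ(xᵢ, X'ᵢ) + c) = c ^ r`.
-/

namespace MeasureTheory

variable {Ω : Type*} [MeasurableSpace Ω] {P : Measure Ω}

lemma norm_integral_le_of_forall_norm_le {E : Type*} [NormedAddCommGroup E] [NormedSpace ℝ E]
    [IsProbabilityMeasure P] {f : Ω → E} {C : ℝ} (hfC : ∀ ω, ‖f ω‖ ≤ C) :
    ‖∫ ω, f ω ∂P‖ ≤ C := by
  simpa using norm_integral_le_of_norm_le_const (μ := P) (.of_forall hfC)

lemma Measurable.integrable_comp_of_norm_le {γ : Type*} [MeasurableSpace γ]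
    [IsFiniteMeasure P] {f : γ → ℝ} (hf : Measurable f) {C : ℝ} (hfC : ∀ z, ‖f z‖ ≤ C) {Z : Ω → γ}
    (hZ : Measurable Z) : Integrable (fun ω ↦ f (Z ω)) P :=
  .of_bound (hf.comp hZ).aestronglyMeasurable C (.of_forall fun ω ↦ hfC (Z ω))

end MeasureTheory

namespace ProbabilityTheory

variable {Ω α β : Type*} [MeasurableSpace Ω] {P : Measure Ω}

lemma IndepFun.integral_comp_eq_integral_integral [MeasurableSpace α] [MeasurableSpace β]
    {E : Type*} [NormedAddCommGroup E] [NormedSpace ℝ E]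
    [IsFiniteMeasure P] {U : Ω → α} {V : Ω → β} (hUV : IndepFun U V P)
    (hU : AEMeasurable U P) (hV : AEMeasurable V P) {f : α → β → E}
    (hf : Integrable (Function.uncurry f) ((P.map U).prod (P.map V))) :
    ∫ ω, f (U ω) (V ω) ∂P = ∫ ω, ∫ ω', f (U ω) (V ω') ∂P ∂P := by
  have hlaw : P.map (fun ω ↦ (U ω, V ω)) = (P.map U).prod (P.map V) :=
    (indepFun_iff_map_prod_eq_prod_map_map hU hV).1 hUV
  calc ∫ ω, f (U ω) (V ω) ∂P
      = ∫ p, Function.uncurry f p ∂(P.map fun ω ↦ (U ω, V ω)) :=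
        (integral_map (hU.prodMk hV) (hlaw ▸ hf).aestronglyMeasurable).symm
    _ = ∫ x, ∫ y, f x y ∂(P.map V) ∂(P.map U) := by
        rw [hlaw, integral_prod _ hf]; rfl
    _ = ∫ ω, ∫ y, f (U ω) y ∂(P.map V) ∂P :=
        integral_map hU hf.integral_prod_left.aestronglyMeasurable
    _ = ∫ ω, ∫ ω', f (U ω) (V ω') ∂P ∂P := by
        refine integral_congr_ae ?_
        filter_upwards [ae_of_ae_map hU hf.prod_right_ae] with ω hω
          using integral_map hV hω.aestronglyMeasurable

lemma iIndepFun.of_map_fun_eq {ι : Type*} [Fintype ι] {𝓧 : ι → Type*}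
    [∀ i, MeasurableSpace (𝓧 i)] {X Y : ∀ i, Ω → 𝓧 i} (hX : iIndepFun X P)
    (hXm : ∀ i, AEMeasurable (X i) P) (hYm : ∀ i, AEMeasurable (Y i) P)
    (hYX : P.map (fun ω i ↦ Y i ω) = P.map (fun ω i ↦ X i ω)) :
    iIndepFun Y P := by
  have : IsProbabilityMeasure P := hX.isProbabilityMeasure
  have hmarginal : ∀ i, P.map (Y i) = P.map (X i) := fun i ↦ by
    have h := congrArg (Measure.map fun x : ∀ j, 𝓧 j ↦ x i) hYX
    rwa [AEMeasurable.map_map_of_aemeasurable (measurable_pi_apply i).aemeasurable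
        (aemeasurable_pi_lambda _ hYm),
      AEMeasurable.map_map_of_aemeasurable (measurable_pi_apply i).aemeasurable
        (aemeasurable_pi_lambda _ hXm)] at h
  rw [iIndepFun_iff_map_fun_eq_pi_map hYm, hYX, hX.map_fun_eq_pi_map hXm]
  simp_rw [hmarginal]

noncomputable def doublyCentered (P : Measure Ω) (K : α → β → ℝ) (U : Ω → α) (V : Ω → β)
    (x : α) (y : β) : ℝ :=
  (∫ ω', K x (V ω') ∂P) + (∫ ω', K (U ω') y ∂P) - K x y - ∫ ω', K (U ω') (V ω') ∂P

section doublyCentered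

variable {K : α → β → ℝ} {U : Ω → α} {V : Ω → β}

lemma measurable_doublyCentered [MeasurableSpace α] [MeasurableSpace β] [SFinite P]
    (hK : Measurable (Function.uncurry K)) (hU : Measurable U) (hV : Measurable V) :
    Measurable (Function.uncurry (doublyCentered P K U V)) := by
  have hleft : Measurable fun x ↦ ∫ ω', K x (V ω') ∂P :=
    (hK.comp (measurable_fst.prodMk (hV.comp measurable_snd))).stronglyMeasurable
      |>.integral_prod_right'.measurable
  have hright : Measurable fun y ↦ ∫ ω', K (U ω') y ∂P :=
    (hK.comp ((hU.comp measurable_snd).prodMk measurable_fst)).stronglyMeasurable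
      |>.integral_prod_right'.measurable
  exact (((hleft.comp measurable_fst).add (hright.comp measurable_snd)).sub hK).sub
    measurable_const

lemma norm_doublyCentered_le [IsProbabilityMeasure P] {C : ℝ} (hKC : ∀ x y, ‖K x y‖ ≤ C)
    (x : α) (y : β) : ‖doublyCentered P K U V x y‖ ≤ 4 * C := by
  unfold doublyCentered
  have h₁ := norm_integral_le_of_forall_norm_le (P := P) fun ω' ↦ hKC x (V ω')
  have h₂ := norm_integral_le_of_forall_norm_le (P := P) fun ω' ↦ hKC (U ω') y
  have h₃ := norm_integral_le_of_forall_norm_le (P := P) fun ω' ↦ hKC (U ω') (V ω')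
  have h₄ := hKC x y
  simp only [Real.norm_eq_abs, abs_le] at *
  constructor <;> linarith

lemma integral_doublyCentered_right [MeasurableSpace α] [MeasurableSpace β]
    [IsProbabilityMeasure P] (hK : Measurable (Function.uncurry K)) {C : ℝ}
    (hKC : ∀ x y, ‖K x y‖ ≤ C) (hU : Measurable U) (hV : Measurable V) (hUV : IndepFun U V P)
    (x : α) : ∫ ω, doublyCentered P K U V x (V ω) ∂P = 0 := by
  have hright : Measurable fun y ↦ ∫ ω', K (U ω') y ∂P :=
    (hK.comp ((hU.comp measurable_snd).prodMk measurable_fst)).stronglyMeasurable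
      |>.integral_prod_right'.measurable
  have hmean : ∫ ω, ∫ ω', K (U ω') (V ω) ∂P ∂P = ∫ ω', K (U ω') (V ω') ∂P := by
    refine (hUV.symm.integral_comp_eq_integral_integral hV.aemeasurable hU.aemeasurable
      (f := fun y x ↦ K x y) ?_).symm
    exact .of_bound (hK.comp measurable_swap).aestronglyMeasurable C
      (.of_forall fun p ↦ hKC p.2 p.1)
  have hKx : Integrable (fun ω ↦ K x (V ω)) P :=
    (hK.comp (measurable_const.prodMk measurable_id)).integrable_comp_of_norm_le (hKC x) hV
  have hright_int : Integrable (fun ω ↦ ∫ ω', K (U ω') (V ω) ∂P) P :=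
    hright.integrable_comp_of_norm_le
      (fun y ↦ norm_integral_le_of_forall_norm_le fun ω' ↦ hKC (U ω') y) hV
  unfold doublyCentered
  have hsum : Integrable (fun ω ↦ (∫ ω', K x (V ω') ∂P) + ∫ ω', K (U ω') (V ω) ∂P) P :=
    (integrable_const _).add hright_int
  rw [integral_sub (hsum.sub' hKx) (integrable_const _), integral_sub hsum hKx,
    integral_add (integrable_const _) hright_int, hmean]
  simp

end doublyCentered

theorem integral_prod_doublyCentered_add_const {ι : Type*} [Fintype ι] {α β : ι → Type*}
    [∀ i, MeasurableSpace (α i)] [∀ i, MeasurableSpace (β i)] [IsProbabilityMeasure P]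
    {X : ∀ i, Ω → α i} {Y : ∀ i, Ω → β i} (hX : ∀ i, Measurable (X i))
    (hY : ∀ i, Measurable (Y i)) (hXY : IndepFun (fun ω i ↦ X i ω) (fun ω i ↦ Y i ω) P)
    (hYindep : iIndepFun Y P) {K : ∀ i, α i → β i → ℝ}
    (hK : ∀ i, Measurable (Function.uncurry (K i))) (hKb : ∀ i, ∃ C, ∀ x y, ‖K i x y‖ ≤ C)
    (c : ℝ) :
    ∫ ω, ∏ i, (doublyCentered P (K i) (X i) (Y i) (X i ω) (Y i ω) + c) ∂P =
      c ^ Fintype.card ι := by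
  choose C hC using hKb
  set W := fun i ↦ doublyCentered P (K i) (X i) (Y i)
  have hWm : ∀ i, Measurable (Function.uncurry (W i)) := fun i ↦
    measurable_doublyCentered (hK i) (hX i) (hY i)
  have hWC : ∀ i x y, ‖W i x y + c‖ ≤ 4 * C i + ‖c‖ := fun i x y ↦
    (norm_add_le _ _).trans (by gcongr; exact norm_doublyCentered_le (hC i) x y)
  have hprod_int : Integrable (Function.uncurry fun (x : ∀ i, α i) (y : ∀ i, β i) ↦
      ∏ i, (W i (x i) (y i) + c)) ((P.map fun ω i ↦ X i ω).prod (P.map fun ω i ↦ Y i ω)) := by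
    refine .of_bound (Finset.measurable_prod _ fun i _ ↦ ?_).aestronglyMeasurable
      (∏ i, (4 * C i + ‖c‖)) (.of_forall fun p ↦ ?_)
    · exact ((hWm i).comp (((measurable_pi_apply i).comp measurable_fst).prodMk
        ((measurable_pi_apply i).comp measurable_snd))).add_const c
    · rw [Function.uncurry_def, norm_prod]
      exact Finset.prod_le_prod (fun i _ ↦ norm_nonneg _) fun i _ ↦ hWC i _ _
  have hfactor : ∀ i x, ∫ ω', (W i x (Y i ω') + c) ∂P = c := fun i x ↦ by
    rw [integral_add ((hWm i).of_uncurry_left.integrable_comp_of_norm_le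
      (fun y ↦ norm_doublyCentered_le (hC i) x y) (hY i)) (integrable_const c),
      integral_doublyCentered_right (hK i) (hC i) (hX i) (hY i)
        (hXY.comp (measurable_pi_apply i) (measurable_pi_apply i)) x]
    simp
  calc ∫ ω, ∏ i, (W i (X i ω) (Y i ω) + c) ∂P
      = ∫ ω, ∫ ω', ∏ i, (W i (X i ω) (Y i ω') + c) ∂P ∂P :=
        hXY.integral_comp_eq_integral_integral (measurable_pi_lambda _ hX).aemeasurable
          (measurable_pi_lambda _ hY).aemeasurable hprod_int
    _ = ∫ ω, ∏ i, ∫ ω', (W i (X i ω) (Y i ω') + c) ∂P ∂P := by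
        refine integral_congr_ae (.of_forall fun ω ↦ ?_)
        exact hYindep.integral_fun_prod_comp (fun i ↦ (hY i).aemeasurable) fun i ↦
          ((hWm i).of_uncurry_left.add_const c).aestronglyMeasurable
    _ = c ^ Fintype.card ι := by simp [hfactor]

end ProbabilityTheory

theorem stmt_12_general {Ω : Type*} [MeasureSpace Ω] [IsProbabilityMeasure (ℙ : Measure Ω)]
    (r : ℕ) (d : Fin r → ℕ)
    (X X' : ∀ i, Ω → EuclideanSpace ℝ (Fin (d i)))
    (hXm : ∀ i, Measurable (X i)) (hX'm : ∀ i, Measurable (X' i))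
    (R : ∀ i, EuclideanSpace ℝ (Fin (d i)) → EuclideanSpace ℝ (Fin (d i)))
    (hR : ∀ i, Measurable (R i))
    (hbdd : ∀ i, ∃ M : ℝ, ∀ x, ‖R i x‖ ≤ M)
    (hcopy : Measure.map (fun ω => fun i => X' i ω) ℙ = Measure.map (fun ω => fun i => X i ω) ℙ)
    (hXX' : IndepFun (fun ω => fun i => X i ω) (fun ω => fun i => X' i ω) ℙ)
    (hindep : iIndepFun X ℙ)
    (c : ℝ) :
    ∫ ω, ∏ i,
        (((∫ ω', ‖R i (X i ω) - R i (X' i ω')‖)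
          + (∫ ω', ‖R i (X i ω') - R i (X' i ω)‖)
          - ‖R i (X i ω) - R i (X' i ω)‖
          - ∫ ω', ‖R i (X i ω') - R i (X' i ω')‖) + c) = c ^ r := by
  have hX'indep : iIndepFun X' ℙ := hindep.of_map_fun_eq (fun i ↦ (hXm i).aemeasurable)
    (fun i ↦ (hX'm i).aemeasurable) hcopy
  have hK : ∀ i, Measurable (Function.uncurry fun x y ↦ ‖R i x - R i y‖) := fun i ↦
    (((hR i).comp measurable_fst).sub ((hR i).comp measurable_snd)).norm
  have hKb : ∀ i, ∃ C, ∀ x y, ‖‖R i x - R i y‖‖ ≤ C := fun i ↦ by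
    obtain ⟨M, hM⟩ := hbdd i
    refine ⟨M + M, fun x y ↦ ?_⟩
    rw [norm_norm]
    exact (norm_sub_le _ _).trans (add_le_add (hM x) (hM y))
  have h := integral_prod_doublyCentered_add_const hXm hX'm hXX' hX'indep hK hKb c
  rwa [Fintype.card_fin] at h

/-- Under mutual independence of `X_1, …, X_r`, the compact product representation of the
rank joint distance covariance vanishes: `E[∏ᵢ (Wᵢ(R(Xᵢ), R(Xᵢ')) + c)] = c^r`. -/
theorem stmt_12 {Ω : Type*} [MeasureSpace Ω] [IsProbabilityMeasure (ℙ : Measure Ω)]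
    (r : ℕ) (d : Fin r → ℕ)
    (X X' : ∀ i, Ω → EuclideanSpace ℝ (Fin (d i)))
    (hXm : ∀ i, Measurable (X i)) (hX'm : ∀ i, Measurable (X' i))
    (R : ∀ i, EuclideanSpace ℝ (Fin (d i)) → EuclideanSpace ℝ (Fin (d i)))
    (hR : ∀ i, Measurable (R i))
    (hbdd : ∀ i, ∃ M : ℝ, ∀ x, ‖R i x‖ ≤ M)
    (hcopy : Measure.map (fun ω => fun i => X' i ω) ℙ = Measure.map (fun ω => fun i => X i ω) ℙ)
    (hXX' : IndepFun (fun ω => fun i => X i ω) (fun ω => fun i => X' i ω) ℙ)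
    (hindep : iIndepFun X ℙ)
    (c : ℝ) (hc : 0 ≤ c) :
    ∫ ω, ∏ i,
        (((∫ ω', ‖R i (X i ω) - R i (X' i ω')‖)
          + (∫ ω', ‖R i (X i ω') - R i (X' i ω)‖)
          - ‖R i (X i ω) - R i (X' i ω)‖
          - ∫ ω', ‖R i (X i ω') - R i (X' i ω')‖) + c) = c ^ r :=
  stmt_12_general r d X X' hXm hX'm R hR hbdd hcopy hXX' hindep c
end
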